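/- Suppose ζ and v are C² functions on an open set U ⊂ ℝ² satisfying Δζ + f ζ = 0 and Δv + f = 0 for some continuous function f of the form f = λ e^{v + φ + log h} with φ, log h ∈ C¹(U), λ > 0. Then for x₀ ∈ ℝ², div(∇ζ(∇v·(x−x₀)) + ∇v(∇ζ·(x−x₀)) − (∇ζ·∇v)(x−x₀)) = −div(f ζ (x−x₀)) + 2 f ζ + f ζ (∇(φ + log h)·(x−x₀)) on U. -/

import Mathlib

/-- First partial derivative of `f : ℝ² → ℝ`. -/
noncomputable def pd1 (f : ℝ × ℝ → ℝ) (x : ℝ × ℝ) : ℝ := fderiv ℝ f x (1, 0)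

/-- Second partial derivative of `f : ℝ² → ℝ`. -/
noncomputable def pd2 (f : ℝ × ℝ → ℝ) (x : ℝ × ℝ) : ℝ := fderiv ℝ f x (0, 1)

/-- Gradient of `f : ℝ² → ℝ`. -/
noncomputable def grad (f : ℝ × ℝ → ℝ) (x : ℝ × ℝ) : ℝ × ℝ := (pd1 f x, pd2 f x)

/-- Divergence of a vector field on `ℝ²`. -/
noncomputable def divg (F : ℝ × ℝ → ℝ × ℝ) (x : ℝ × ℝ) : ℝ :=
  pd1 (fun y => (F y).1) x + pd2 (fun y => (F y).2) x

/-- Laplacian of `f : ℝ² → ℝ`. -/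
noncomputable def lap (f : ℝ × ℝ → ℝ) (x : ℝ × ℝ) : ℝ := divg (grad f) x

/-- Euclidean dot product on `ℝ²`. -/
def dot (a b : ℝ × ℝ) : ℝ := a.1 * b.1 + a.2 * b.2

/-!
The vector field on the left is the Rellich–Pohozaev field of `(ζ, v)`. In its divergence the
Hessian terms cancel by symmetry of second derivatives, and the first-order terms `2 ∇ζ·∇v` cancel
against `(∇ζ·∇v) div(x − x₀) = 2 ∇ζ·∇v`, leaving `(∇v·(x−x₀)) Δζ + (∇ζ·(x−x₀)) Δv`.
On the right, `f = λ e^{v+φ+log h}` near `x` gives `∇f = f ∇(v + φ + log h)`, so the right-hand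
side is `−(fζ ∇v + f ∇ζ)·(x−x₀)`. Substituting `Δζ = −fζ` and `Δv = −f` makes the two sides agree.
-/

open Filter Topology ContinuousLinearMap

theorem dot_apply_basis (L : ℝ × ℝ →L[ℝ] ℝ) (w : ℝ × ℝ) :
    dot (L ((1 : ℝ), (0 : ℝ)), L ((0 : ℝ), (1 : ℝ))) w = L w := by
  have hw : w = w.1 • ((1 : ℝ), (0 : ℝ)) + w.2 • ((0 : ℝ), (1 : ℝ)) := by ext <;> simp
  conv_rhs => rw [hw]
  simp only [map_add, map_smul, smul_eq_mul, dot]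
  ring

theorem dot_grad (g : ℝ × ℝ → ℝ) (x w : ℝ × ℝ) : dot (grad g x) w = fderiv ℝ g x w :=
  dot_apply_basis (fderiv ℝ g x) w

theorem dot_comm (a b : ℝ × ℝ) : dot a b = dot b a := by
  simp only [dot]; ring

section DotProduct

variable {E : Type*} [NormedAddCommGroup E] [NormedSpace ℝ E] {A B : E → ℝ × ℝ} {x : E}

@[fun_prop]
theorem DifferentiableAt.dot (hA : DifferentiableAt ℝ A x) (hB : DifferentiableAt ℝ B x) :
    DifferentiableAt ℝ (fun y => dot (A y) (B y)) x :=
  (hA.fst.mul hB.fst).add (hA.snd.mul hB.snd)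

theorem fderiv_dot (hA : DifferentiableAt ℝ A x) (hB : DifferentiableAt ℝ B x) (w : E) :
    fderiv ℝ (fun y => dot (A y) (B y)) x w
      = dot (fderiv ℝ A x w) (B x) + dot (A x) (fderiv ℝ B x w) := by
  simp only [dot]
  rw [fderiv_fun_add (by fun_prop) (by fun_prop), fderiv_fun_mul hA.fst hB.fst,
    fderiv_fun_mul hA.snd hB.snd, fderiv.fst hA, fderiv.fst hB, fderiv.snd hA, fderiv.snd hB]
  simp only [add_apply, smul_apply, comp_apply, coe_fst', coe_snd', smul_eq_mul]
  ring

end DotProduct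

theorem dot_grad_dot {A B : ℝ × ℝ → ℝ × ℝ} {x : ℝ × ℝ} (hA : DifferentiableAt ℝ A x)
    (hB : DifferentiableAt ℝ B x) (w : ℝ × ℝ) :
    dot (grad (fun y => dot (A y) (B y)) x) w
      = dot (fderiv ℝ A x w) (B x) + dot (A x) (fderiv ℝ B x w) :=
  (dot_grad _ x w).trans (fderiv_dot hA hB w)

section Hessian

variable {g : ℝ × ℝ → ℝ} {x : ℝ × ℝ}

theorem grad_eq_fderiv :
    grad g = fun y => (fderiv ℝ g y ((1 : ℝ), (0 : ℝ)), fderiv ℝ g y ((0 : ℝ), (1 : ℝ))) :=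
  rfl

theorem differentiableAt_grad (hg : ContDiffAt ℝ 2 g x) : DifferentiableAt ℝ (grad g) x := by
  have hd : DifferentiableAt ℝ (fderiv ℝ g) x :=
    (hg.fderiv_right (m := 1) (by norm_num)).differentiableAt one_ne_zero
  rw [grad_eq_fderiv]
  exact (hd.clm_apply (differentiableAt_const _)).prodMk (hd.clm_apply (differentiableAt_const _))

theorem dot_fderiv_grad (hg : ContDiffAt ℝ 2 g x) (w w' : ℝ × ℝ) :
    dot (fderiv ℝ (grad g) x w) w' = fderiv ℝ (fderiv ℝ g) x w w' := by
  have hd : DifferentiableAt ℝ (fderiv ℝ g) x :=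
    (hg.fderiv_right (m := 1) (by norm_num)).differentiableAt one_ne_zero
  rw [grad_eq_fderiv, DifferentiableAt.fderiv_prodMk (hd.clm_apply (differentiableAt_const _))
    (hd.clm_apply (differentiableAt_const _))]
  simp only [fderiv_clm_apply hd (differentiableAt_const _)]
  simpa using dot_apply_basis (fderiv ℝ (fderiv ℝ g) x w) w'

theorem fderiv_fderiv_swap (hg : ContDiffAt ℝ 2 g x) (w w' : ℝ × ℝ) :
    fderiv ℝ (fderiv ℝ g) x w w' = fderiv ℝ (fderiv ℝ g) x w' w :=
  hg.isSymmSndFDerivAt (by simp) w w'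

end Hessian

section Calculus

variable {g : ℝ × ℝ → ℝ} {H K : ℝ × ℝ → ℝ × ℝ} {x : ℝ × ℝ}

theorem divg_eq_fderiv (hH : DifferentiableAt ℝ H x) :
    divg H x = (fderiv ℝ H x ((1 : ℝ), (0 : ℝ))).1 + (fderiv ℝ H x ((0 : ℝ), (1 : ℝ))).2 := by
  simp only [divg, pd1, pd2, fderiv.fst hH, fderiv.snd hH]
  rfl

theorem divg_add (hH : DifferentiableAt ℝ H x) (hK : DifferentiableAt ℝ K x) :
    divg (fun y => H y + K y) x = divg H x + divg K x := by
  rw [divg_eq_fderiv (H := fun y => H y + K y) (hH.add hK), divg_eq_fderiv hH, divg_eq_fderiv hK,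
    fderiv_fun_add hH hK]
  simp only [add_apply, Prod.fst_add, Prod.snd_add]
  ring

theorem divg_sub (hH : DifferentiableAt ℝ H x) (hK : DifferentiableAt ℝ K x) :
    divg (fun y => H y - K y) x = divg H x - divg K x := by
  rw [divg_eq_fderiv (H := fun y => H y - K y) (hH.sub hK), divg_eq_fderiv hH, divg_eq_fderiv hK,
    fderiv_fun_sub hH hK]
  simp only [sub_apply, Prod.fst_sub, Prod.snd_sub]
  ring

theorem divg_smul (hg : DifferentiableAt ℝ g x) (hH : DifferentiableAt ℝ H x) :
    divg (fun y => g y • H y) x = dot (grad g x) (H x) + g x * divg H x := by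
  rw [divg_eq_fderiv (H := fun y => g y • H y) (hg.smul hH), divg_eq_fderiv hH,
    fderiv_fun_smul hg hH]
  simp only [add_apply, smul_apply, smulRight_apply,
    Prod.fst_add, Prod.snd_add, Prod.smul_fst, Prod.smul_snd, smul_eq_mul, dot, grad, pd1, pd2]
  ring

theorem divg_sub_const (x₀ : ℝ × ℝ) : divg (fun y => y - x₀) x = 2 := by
  rw [divg_eq_fderiv (by fun_prop), fderiv_sub_const, fderiv_fun_id]
  norm_num

theorem divg_smul_sub_const (hg : DifferentiableAt ℝ g x) (x₀ : ℝ × ℝ) :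
    divg (fun y => g y • (y - x₀)) x = dot (grad g x) (x - x₀) + 2 * g x := by
  rw [divg_smul hg (by fun_prop), divg_sub_const]
  ring

end Calculus

theorem divg_rellich {ζ v : ℝ × ℝ → ℝ} {x : ℝ × ℝ} (hζ : ContDiffAt ℝ 2 ζ x)
    (hv : ContDiffAt ℝ 2 v x) (x₀ : ℝ × ℝ) :
    divg (fun y =>
        dot (grad v y) (y - x₀) • grad ζ y + dot (grad ζ y) (y - x₀) • grad v y
          - dot (grad ζ y) (grad v y) • (y - x₀)) x
      = dot (grad v x) (x - x₀) * lap ζ x + dot (grad ζ x) (x - x₀) * lap v x := by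
  have ha := differentiableAt_grad hv
  have hb := differentiableAt_grad hζ
  have hX : DifferentiableAt ℝ (fun y : ℝ × ℝ => y - x₀) x := by fun_prop
  rw [divg_sub (by fun_prop) (by fun_prop), divg_add (by fun_prop) (by fun_prop),
    divg_smul (by fun_prop) hb, divg_smul (by fun_prop) ha, divg_smul (by fun_prop) hX,
    divg_sub_const]
  simp only [dot_grad_dot ha hX, dot_grad_dot hb hX, dot_grad_dot hb ha, fderiv_sub_const,
    fderiv_fun_id, id_apply, dot_fderiv_grad hv, dot_fderiv_grad hζ]
  rw [dot_comm (grad ζ x) (fderiv ℝ (grad v) x (x - x₀)), dot_fderiv_grad hv,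
    fderiv_fderiv_swap hv (x - x₀), fderiv_fderiv_swap hζ (x - x₀),
    dot_comm (grad ζ x) (grad v x), lap, lap]
  ring

theorem hasFDerivAt_of_eventuallyEq_const_mul_exp {E : Type*} [NormedAddCommGroup E]
    [NormedSpace ℝ E] {f u : E → ℝ} {x : E} {c : ℝ} (hu : DifferentiableAt ℝ u x)
    (hf : f =ᶠ[𝓝 x] fun y => c * Real.exp (u y)) :
    HasFDerivAt f (f x • fderiv ℝ u x) x := by
  rw [hf.eq_of_nhds, mul_smul]
  exact (hu.hasFDerivAt.exp.const_mul c).congr_of_eventuallyEq hf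

theorem stmt_9_general (U : Set (ℝ × ℝ)) (hU : IsOpen U) (ζ v φ logh : ℝ × ℝ → ℝ)
    (hζ : ContDiffOn ℝ 2 ζ U) (hv : ContDiffOn ℝ 2 v U)
    (hφ : ContDiffOn ℝ 1 φ U) (hlogh : ContDiffOn ℝ 1 logh U)
    (lam : ℝ)
    (f : ℝ × ℝ → ℝ) (hf : ∀ y ∈ U, f y = lam * Real.exp (v y + φ y + logh y))
    (heqζ : ∀ y ∈ U, lap ζ y + f y * ζ y = 0)
    (heqv : ∀ y ∈ U, lap v y + f y = 0)
    (x₀ : ℝ × ℝ) (x : ℝ × ℝ) (hx : x ∈ U) :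
    divg (fun y =>
        dot (grad v y) (y - x₀) • grad ζ y + dot (grad ζ y) (y - x₀) • grad v y
          - dot (grad ζ y) (grad v y) • (y - x₀)) x
      = -divg (fun y => (f y * ζ y) • (y - x₀)) x + 2 * f x * ζ x
          + f x * ζ x * dot (grad (fun y => φ y + logh y) x) (x - x₀) := by
  have hUx : U ∈ 𝓝 x := hU.mem_nhds hx
  have hζx := hζ.contDiffAt hUx
  have hvx := hv.contDiffAt hUx
  have hζd : DifferentiableAt ℝ ζ x := hζx.differentiableAt (by norm_num)
  have hvd : DifferentiableAt ℝ v x := hvx.differentiableAt (by norm_num)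
  have hψd : DifferentiableAt ℝ (fun y => φ y + logh y) x :=
    ((hφ.contDiffAt hUx).differentiableAt one_ne_zero).add
      ((hlogh.contDiffAt hUx).differentiableAt one_ne_zero)
  have hfd : HasFDerivAt f (f x • fderiv ℝ (fun y => v y + (φ y + logh y)) x) x := by
    refine hasFDerivAt_of_eventuallyEq_const_mul_exp (c := lam) (hvd.add hψd) ?_
    filter_upwards [hUx] with y hy
    rw [hf y hy, add_assoc]
  rw [divg_rellich hζx hvx, divg_smul_sub_const (hfd.differentiableAt.fun_mul hζd)]
  simp only [dot_grad]
  rw [fderiv_fun_mul hfd.differentiableAt hζd, hfd.fderiv, fderiv_fun_add hvd hψd]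
  simp only [add_apply, smul_apply, smul_eq_mul]
  linear_combination fderiv ℝ v x (x - x₀) * heqζ x hx + fderiv ℝ ζ x (x - x₀) * heqv x hx

/-- The divergence computation \eqref{4.4}: if `Δζ + fζ = 0` and `Δv + f = 0` with
`f = λ e^{v + φ + log h}`, then
`div(∇ζ(∇v·(x−x₀)) + ∇v(∇ζ·(x−x₀)) − (∇ζ·∇v)(x−x₀))
  = −div(fζ(x−x₀)) + 2fζ + fζ(∇(φ + log h)·(x−x₀))`. -/
theorem stmt_9 (U : Set (ℝ × ℝ)) (hU : IsOpen U) (ζ v φ logh : ℝ × ℝ → ℝ)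
    (hζ : ContDiffOn ℝ 2 ζ U) (hv : ContDiffOn ℝ 2 v U)
    (hφ : ContDiffOn ℝ 1 φ U) (hlogh : ContDiffOn ℝ 1 logh U)
    (lam : ℝ) (hlam : 0 < lam)
    (f : ℝ × ℝ → ℝ) (hf : ∀ y ∈ U, f y = lam * Real.exp (v y + φ y + logh y))
    (heqζ : ∀ y ∈ U, lap ζ y + f y * ζ y = 0)
    (heqv : ∀ y ∈ U, lap v y + f y = 0)
    (x₀ : ℝ × ℝ) (x : ℝ × ℝ) (hx : x ∈ U) :
    divg (fun y =>
        dot (grad v y) (y - x₀) • grad ζ y + dot (grad ζ y) (y - x₀) • grad v y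
          - dot (grad ζ y) (grad v y) • (y - x₀)) x
      = -divg (fun y => (f y * ζ y) • (y - x₀)) x + 2 * f x * ζ x
          + f x * ζ x * dot (grad (fun y => φ y + logh y) x) (x - x₀) :=
  stmt_9_general U hU ζ v φ logh hζ hv hφ hlogh lam f hf heqζ heqv x₀ x hx
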